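/- arXiv:math/0506458 — 6 statements merged into one kernel-verified Lean document; each statement's English description precedes it below -/
import Mathlib

section
/- For every integer n \geq 1 and real u, the derivative of the Bessel polynomial satisfies q_n'(u) = q_n(u) - (u / (2n-1)) * q_{n-1}(u). -/
open Finset

/-- The Bessel polynomial `q_n(u)`. -/
noncomputable def qBessel (n : ℕ) (u : ℝ) : ℝ :=
  ∑ k ∈ Finset.range (n + 1),
    ((n.factorial * (2 * n - k).factorial * 2 ^ k : ℝ) /
      ((2 * n).factorial * (n - k).factorial * k.factorial)) * u ^ k

/-!
Comparing coefficients of `u ^ k`, the identity says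
`(k + 1) α_{k+1}^{(n)} = α_k^{(n)} - α_{k-1}^{(n-1)} / (2n - 1)`.
Both sides equal `2 (n - k) / (2n - k) · α_k^{(n)}`: the left one by the ratio
`α_{k+1}^{(n)} / α_k^{(n)}`, the right one because `α_{k-1}^{(n-1)} / (2n - 1) = k / (2n - k) · α_k^{(n)}`.
-/

open Polynomial
open scoped Nat

noncomputable def besselCoeff (n k : ℕ) : ℝ :=
  (n ! * (2 * n - k)! * 2 ^ k : ℝ) / ((2 * n)! * (n - k)! * k !)

noncomputable def besselPoly (n : ℕ) : ℝ[X] :=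
  ∑ k ∈ range (n + 1), C (besselCoeff n k) * X ^ k

theorem eval_besselPoly (n : ℕ) (u : ℝ) : (besselPoly n).eval u = qBessel n u := by
  simp [besselPoly, qBessel, besselCoeff, eval_finsetSum]

theorem coeff_besselPoly (n k : ℕ) :
    (besselPoly n).coeff k = if k ≤ n then besselCoeff n k else 0 := by
  simp [besselPoly]

theorem besselCoeff_succ_right {n k : ℕ} (hk : k < n) :
    besselCoeff n (k + 1) = 2 * (n - k) / ((k + 1) * (2 * n - k)) * besselCoeff n k := by
  obtain ⟨j, rfl⟩ := Nat.exists_eq_add_of_lt hk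
  rw [besselCoeff, besselCoeff, show 2 * (k + j + 1) - k = (k + 2 * j + 1) + 1 by omega,
    show 2 * (k + j + 1) - (k + 1) = k + 2 * j + 1 by omega,
    show k + j + 1 - k = j + 1 by omega, show k + j + 1 - (k + 1) = j by omega]
  simp only [Nat.factorial_succ]
  push_cast
  rw [show (2 * ((k : ℝ) + j + 1) - k) = k + 2 * j + 2 by ring,
    show ((k : ℝ) + j + 1 - k) = j + 1 by ring]
  field_simp
  ring

theorem besselCoeff_eq_mul_besselCoeff_succ_succ {n k : ℕ} (hk : k ≤ n) :
    besselCoeff n k = (2 * n + 1) * (k + 1) / (2 * n + 1 - k) * besselCoeff (n + 1) (k + 1) := by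
  obtain ⟨j, rfl⟩ := Nat.exists_eq_add_of_le hk
  rw [besselCoeff, besselCoeff, show 2 * (k + j + 1) - (k + 1) = k + 2 * j + 1 by omega,
    show 2 * (k + j) - k = k + 2 * j by omega, show k + j + 1 - (k + 1) = j by omega,
    show k + j - k = j by omega, show 2 * (k + j + 1) = 2 * (k + j) + 1 + 1 by omega]
  simp only [Nat.factorial_succ]
  push_cast
  rw [show (2 * ((k : ℝ) + j) + 1 - k) = k + 2 * j + 1 by ring]
  field_simp
  ring

theorem derivative_besselPoly_succ (n : ℕ) :
    derivative (besselPoly (n + 1)) =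
      besselPoly (n + 1) - C (2 * n + 1 : ℝ)⁻¹ * X * besselPoly n := by
  ext k
  rw [coeff_derivative, coeff_sub, mul_assoc, coeff_C_mul]
  rcases k with _ | k
  · simp only [coeff_besselPoly, coeff_X_mul_zero, if_pos (Nat.zero_le _), if_pos le_add_self,
      besselCoeff_succ_right (Nat.succ_pos n)]
    push_cast
    field_simp
    ring
  · rw [coeff_X_mul, coeff_besselPoly, coeff_besselPoly, coeff_besselPoly]
    rcases lt_trichotomy k n with hk | rfl | hk
    · rw [if_pos (by omega), if_pos (by omega), if_pos hk.le,
        besselCoeff_succ_right (show k + 1 < n + 1 by omega),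
        besselCoeff_eq_mul_besselCoeff_succ_succ hk.le]
      have hkn : (2 * n + 1 - k : ℝ) ≠ 0 := by
        have : (k : ℝ) < n := by exact_mod_cast hk
        linarith
      push_cast
      rw [show (2 * ((n : ℝ) + 1) - (k + 1)) = 2 * n + 1 - k by ring,
        show ((n : ℝ) + 1 - (k + 1)) = n - k by ring]
      field_simp
      ring
    · rw [if_neg (by omega), if_pos le_rfl, if_pos le_rfl,
        besselCoeff_eq_mul_besselCoeff_succ_succ (le_refl k),
        show (2 * (k : ℝ) + 1 - k) = k + 1 by ring]
      field_simp
      ring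
    · rw [if_neg (by omega), if_neg (by omega), if_neg (by omega)]
      simp

theorem qBessel_deriv (n : ℕ) (hn : 1 ≤ n) (u : ℝ) :
    deriv (qBessel n) u = qBessel n u - u / (2 * (n : ℝ) - 1) * qBessel (n - 1) u := by
  obtain ⟨m, rfl⟩ := Nat.exists_eq_add_of_le' hn
  have hq : qBessel (m + 1) = fun u => (besselPoly (m + 1)).eval u :=
    funext fun u => (eval_besselPoly _ _).symm
  rw [hq, Polynomial.deriv, derivative_besselPoly_succ]
  simp only [eval_sub, eval_mul, eval_C, eval_X, eval_besselPoly, Nat.add_sub_cancel]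
  push_cast
  ring
end

section
/- For integers 0 \leq k \leq n and all real u, u^{2k} q_{n-k}(u) = \sum_{i=0}^{k} \gamma_i^{(n,k)} q_{n+i}(u), where \gamma_i^{(n,k)} = 2^{2k} * C(k,i) * (n-k+1/2)_{k+i} * (-n-1/2)_{k-i} and (z)_m denotes the rising factorial z(z+1)...(z+m-1). -/
open Finset

open Polynomial

noncomputable def qc (n k : ℕ) : ℝ :=
  ((n.factorial * (2 * n - k).factorial * 2 ^ k : ℝ) /
      ((2 * n).factorial * (n - k).factorial * k.factorial))

noncomputable def qB (n : ℕ) (u : ℝ) : ℝ := ∑ k ∈ Finset.range (n + 1), qc n k * u ^ k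

lemma midcoef (t s : ℕ) :
    qc (t+s+1) t = ((2*(t+s)+3) * (2*(t+s)+5) : ℝ) * (qc (t+s+3) (t+2) - qc (t+s+2) (t+2)) := by
  unfold qc
  rw [show 2*(t+s+1) - t = t+2*s+2 by omega, show t+s+1 - t = s+1 by omega,
      show 2*(t+s+3) - (t+2) = t+2*s+4 by omega, show t+s+3 - (t+2) = s+1 by omega,
      show 2*(t+s+2) - (t+2) = t+2*s+2 by omega, show t+s+2 - (t+2) = s by omega,
      show 2*(t+s+1) = 2*t+2*s+2 by omega, show 2*(t+s+3) = 2*t+2*s+6 by omega,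
      show 2*(t+s+2) = 2*t+2*s+4 by omega]
  have e1 : ((t+2*s+4).factorial : ℝ) = (t+2*s+4)*((t+2*s+3))*(t+2*s+2).factorial := by
    rw [show t+2*s+4 = (t+2*s+2)+1+1 by ring, Nat.factorial_succ, Nat.factorial_succ]
    push_cast; ring
  have e2 : ((2*t+2*s+6).factorial : ℝ)
      = (2*t+2*s+6)*(2*t+2*s+5)*(2*t+2*s+4)*(2*t+2*s+3)*(2*t+2*s+2).factorial := by
    rw [show 2*t+2*s+6 = (2*t+2*s+2)+1+1+1+1 by ring, Nat.factorial_succ, Nat.factorial_succ,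
        Nat.factorial_succ, Nat.factorial_succ]
    push_cast; ring
  have e3 : ((2*t+2*s+4).factorial : ℝ) = (2*t+2*s+4)*(2*t+2*s+3)*(2*t+2*s+2).factorial := by
    rw [show 2*t+2*s+4 = (2*t+2*s+2)+1+1 by ring, Nat.factorial_succ, Nat.factorial_succ]
    push_cast; ring
  have e4 : ((t+s+3).factorial : ℝ) = (t+s+3)*(t+s+2)*(t+s+1).factorial := by
    rw [show t+s+3 = (t+s+1)+1+1 by ring, Nat.factorial_succ, Nat.factorial_succ]
    push_cast; ring
  have e5 : ((t+s+2).factorial : ℝ) = (t+s+2)*(t+s+1).factorial := by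
    rw [show t+s+2 = (t+s+1)+1 by ring, Nat.factorial_succ]; push_cast; ring
  have e6 : ((s+1).factorial : ℝ) = (s+1)*s.factorial := by
    rw [Nat.factorial_succ]; push_cast; ring
  have e7 : ((t+2).factorial : ℝ) = (t+2)*(t+1)*t.factorial := by
    rw [show t+2 = t+1+1 by ring, Nat.factorial_succ, Nat.factorial_succ]; push_cast; ring
  rw [e1, e2, e3, e4, e5, e6, e7]
  have h1 : ((t+s+1).factorial : ℝ) ≠ 0 := by positivity
  have h2 : ((t+2*s+2).factorial : ℝ) ≠ 0 := by positivity
  have h3 : ((2*t+2*s+2).factorial : ℝ) ≠ 0 := by positivity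
  have h4 : (s.factorial : ℝ) ≠ 0 := by positivity
  have h5 : (t.factorial : ℝ) ≠ 0 := by positivity
  field_simp
  push_cast
  ring

lemma qc_zero (n : ℕ) : qc n 0 = 1 := by
  unfold qc
  have h1 : ((2*n).factorial : ℝ) ≠ 0 := by positivity
  have h2 : (n.factorial : ℝ) ≠ 0 := by positivity
  simp
  field_simp

lemma qc_one (n : ℕ) : qc (n+1) 1 = 1 := by
  unfold qc
  rw [show 2*(n+1) - 1 = 2*n+1 by omega, show n+1-1 = n by omega,
      show 2*(n+1) = 2*n+1+1 by omega]
  have e : ((2*n+1+1).factorial : ℝ) = (2*n+2)*(2*n+1).factorial := by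
    rw [Nat.factorial_succ]; push_cast; ring
  have e2 : ((n+1).factorial : ℝ) = (n+1)*n.factorial := by
    rw [Nat.factorial_succ]; push_cast; ring
  rw [e, e2]
  have h1 : ((2*n+1).factorial : ℝ) ≠ 0 := by positivity
  have h2 : (n.factorial : ℝ) ≠ 0 := by positivity
  field_simp
  ring

lemma topcoef (m : ℕ) : qc m m = ((2*m+1) * (2*m+3) : ℝ) * qc (m+2) (m+2) := by
  unfold qc
  rw [show 2*m - m = m by omega, Nat.sub_self, show 2*(m+2) - (m+2) = m+2 by omega,
      Nat.sub_self, show 2*(m+2) = 2*m+4 by omega]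
  have e1 : ((2*m+4).factorial : ℝ) = (2*m+4)*(2*m+3)*(2*m+2)*(2*m+1)*(2*m).factorial := by
    rw [show 2*m+4 = 2*m+1+1+1+1 by ring, Nat.factorial_succ, Nat.factorial_succ,
        Nat.factorial_succ, show 2*m+1 = 2*m+1 by ring, Nat.factorial_succ]
    push_cast; ring
  have e2 : ((m+2).factorial : ℝ) = (m+2)*(m+1)*m.factorial := by
    rw [show m+2 = m+1+1 by ring, Nat.factorial_succ, Nat.factorial_succ]; push_cast; ring
  rw [e1, e2]
  have h1 : ((2*m).factorial : ℝ) ≠ 0 := by positivity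
  have h2 : ((m).factorial : ℝ) ≠ 0 := by positivity
  field_simp
  ring


lemma base (m : ℕ) (u : ℝ) :
    u^2 * qB m u = ((2*(m:ℝ)+1) * (2*(m:ℝ)+3)) * (qB (m+2) u - qB (m+1) u) := by
  set c : ℝ := (2*(m:ℝ)+1) * (2*(m:ℝ)+3) with hc
  have hL : u^2 * qB m u = (∑ t ∈ range m, qc m t * u^(t+2)) + qc m m * u^(m+2) := by
    unfold qB
    rw [Finset.mul_sum, Finset.sum_range_succ]
    congr 1
    exact Finset.sum_congr rfl (fun t _ => by ring)
    ring
  have hsub : ∑ j ∈ range (m+2), (qc (m+2) j - qc (m+1) j) * u^j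
      = (∑ j ∈ range (m+2), qc (m+2) j * u^j) - ∑ j ∈ range (m+2), qc (m+1) j * u^j := by
    rw [← Finset.sum_sub_distrib]
    exact Finset.sum_congr rfl (fun j _ => by ring)
  have hR : qB (m+2) u - qB (m+1) u
      = (∑ j ∈ range (m+2), (qc (m+2) j - qc (m+1) j) * u^j) + qc (m+2) (m+2) * u^(m+2) := by
    unfold qB
    rw [hsub, show m+2+1 = (m+2)+1 by omega, Finset.sum_range_succ,
        show m+1+1 = m+2 by omega]
    ring
  have hMid : ∑ j ∈ range (m+2), (qc (m+2) j - qc (m+1) j) * u^j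
      = ∑ t ∈ range m, (qc (m+2) (t+2) - qc (m+1) (t+2)) * u^(t+2) := by
    rw [show m+2 = (m+1)+1 by omega, Finset.sum_range_succ', Finset.sum_range_succ']
    have q1 : qc (m+2) 1 = 1 := by rw [show m+2 = (m+1)+1 by omega]; exact qc_one (m+1)
    have q1' : qc (m+1) 1 = 1 := qc_one m
    simp [qc_zero, q1, q1']
  rw [hL, hR, hMid, mul_add, Finset.mul_sum]
  congr 1
  · refine Finset.sum_congr rfl (fun t ht => ?_)
    have ht' := Finset.mem_range.mp ht
    obtain ⟨s, rfl⟩ : ∃ s, m = t + s + 1 := ⟨m - t - 1, by omega⟩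
    rw [show t+s+1+2 = t+s+3 by omega, show t+s+1+1 = t+s+2 by omega, midcoef t s, hc]
    push_cast
    ring
  · rw [topcoef m, hc]
    push_cast
    ring

noncomputable def P (m : ℕ) (z : ℝ) : ℝ := (ascPochhammer ℝ m).eval z

lemma P_succ (m : ℕ) (z : ℝ) : P (m+1) z = P m z * (z + m) := ascPochhammer_succ_eval m z

lemma P_left (m : ℕ) (z : ℝ) : P (m+1) z = z * P m (z + 1) := by
  unfold P
  rw [ascPochhammer_succ_left]
  simp [Polynomial.eval_comp]

lemma P_zero (z : ℝ) : P 0 z = 1 := by simp [P]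

noncomputable def g (x : ℝ) (k i : ℕ) : ℝ :=
  4 ^ k * (k.choose i : ℝ) * P (k + i) (x - k) * P (k - i) (-x)

lemma gam0 (x : ℝ) (k : ℕ) : g x (k+1) 0 = -(g (x-1) k 0 * (4*(x-1)*x)) := by
  unfold g
  rw [Nat.choose_zero_right, Nat.choose_zero_right, Nat.add_zero, Nat.add_zero,
      Nat.sub_zero, Nat.sub_zero, P_succ, P_left]
  push_cast
  rw [show -x + 1 = -(x-1) by ring, show x - ((k:ℝ)+1) = x - 1 - k by ring]
  ring

lemma gamtop (x : ℝ) (k : ℕ) :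
    g x (k+1) (k+1) = g (x-1) k k * (4*(x+k-1)*(x+k)) := by
  unfold g
  rw [Nat.choose_self, Nat.choose_self, Nat.sub_self, Nat.sub_self,
      show (k+1)+(k+1) = (k+k)+1+1 by omega, P_succ, P_succ, P_zero, P_zero]
  push_cast
  rw [show x - ((k:ℝ)+1) = x - 1 - k by ring]
  ring

lemma gammid (x : ℝ) (t s : ℕ) :
    g x (t+s+1+1) (t+1) = g (x-1) (t+s+1) t * (4*(x+t-1)*(x+t))
      - g (x-1) (t+s+1) (t+1) * (4*(x+t)*(x+t+1)) := by
  unfold g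
  rw [show (t+s+1+1)+(t+1) = (2*t+s+1)+1+1 by omega,
      show (t+s+1+1)-(t+1) = s+1 by omega,
      show (t+s+1)+t = 2*t+s+1 by omega,
      show (t+s+1)-t = s+1 by omega,
      show (t+s+1)+(t+1) = (2*t+s+1)+1 by omega,
      show (t+s+1)-(t+1) = s by omega]
  have pas : ((t+s+1+1).choose (t+1) : ℝ)
      = ((t+s+1).choose t : ℝ) + ((t+s+1).choose (t+1) : ℝ) := by
    rw [show t+s+1+1 = (t+s+1)+1 by omega, Nat.choose_succ_succ]
    push_cast; ring
  have hrel : ((t+s+1).choose t : ℝ) * (s+1) = ((t+s+1).choose (t+1) : ℝ) * (t+1) := by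
    have := Nat.choose_succ_right_eq (t+s+1) t
    rw [show t+s+1-t = s+1 by omega] at this
    exact_mod_cast this.symm
  rw [pas]
  push_cast
  rw [show x - ((t:ℝ)+(s:ℝ)+1+1) = x-1-((t:ℝ)+(s:ℝ)+1) by ring]
  set y : ℝ := x-1-((t:ℝ)+(s:ℝ)+1) with hy
  rw [P_succ (2*t+s+1+1) y, P_succ (2*t+s+1) y, P_left s (-x), P_succ s (-(x-1))]
  rw [show -x + 1 = -(x-1) by ring]
  push_cast
  set A := P (2*t+s+1) y
  set B := P s (-(x-1))
  linear_combination (-(4:ℝ)^(t+s+1) * 4 * A * B * (x + t - 1) * (x + t)) * hrel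





lemma key (u : ℝ) : ∀ k n : ℕ, k ≤ n →
    u^(2*k) * qB (n-k) u = ∑ j ∈ Finset.range (k+1), g ((n:ℝ)+1/2) k j * qB (n+j) u := by
  intro k
  induction k with
  | zero =>
    intro n _
    simp [g, P_zero]
  | succ k IH =>
    intro n hkn
    have hn1 : 1 ≤ n := by omega
    set x : ℝ := (n:ℝ) + 1/2 with hx
    have hcast : ((n-1 : ℕ) : ℝ) = (n:ℝ) - 1 := by
      rw [Nat.cast_sub hn1]; norm_num
    have hx1 : ((n-1 : ℕ) : ℝ) + 1/2 = x - 1 := by rw [hcast, hx]; ring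
    set h : ℕ → ℝ := fun j => g (x-1) k j * (4*(x+j-1)*(x+j)) with hh
    have step1 : u^(2*(k+1)) * qB (n-(k+1)) u
        = ∑ j ∈ Finset.range (k+1), g (x-1) k j * (u^2 * qB ((n-1)+j) u) := by
      rw [show n-(k+1) = (n-1)-k by omega, show 2*(k+1) = 2*k+2 by ring, pow_add]
      rw [show u^(2*k) * u^2 * qB ((n-1)-k) u = u^2 * (u^(2*k) * qB ((n-1)-k) u) by ring]
      rw [IH (n-1) (by omega), hx1, Finset.mul_sum]
      exact Finset.sum_congr rfl (fun j _ => by ring)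
    have step2 : ∀ j, u^2 * qB ((n-1)+j) u
        = (4*(x+j-1)*(x+j)) * (qB (n+j+1) u - qB (n+j) u) := by
      intro j
      rw [base ((n-1)+j) u, show (n-1)+j+2 = n+j+1 by omega, show (n-1)+j+1 = n+j by omega]
      have : ((((n-1)+j : ℕ)) : ℝ) = (n:ℝ) - 1 + j := by
        push_cast [Nat.cast_sub hn1]; ring
      rw [this, hx]
      ring
    have step3 : u^(2*(k+1)) * qB (n-(k+1)) u
        = (∑ j ∈ Finset.range (k+1), h j * qB (n+j+1) u)
          - ∑ j ∈ Finset.range (k+1), h j * qB (n+j) u := by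
      rw [step1, ← Finset.sum_sub_distrib]
      refine Finset.sum_congr rfl (fun j _ => ?_)
      rw [step2 j, hh]
      ring
    have S1 : ∑ j ∈ Finset.range (k+1+1), (if j = 0 then 0 else h (j-1)) * qB (n+j) u
        = ∑ j ∈ Finset.range (k+1), h j * qB (n+j+1) u := by
      refine (Finset.sum_range_succ' (fun j => (if j = 0 then (0:ℝ) else h (j-1)) * qB (n+j) u) (k+1)).trans ?_
      simp only [Nat.succ_ne_zero, if_false, if_true, reduceIte, Nat.add_sub_cancel, zero_mul, add_zero]
      exact Finset.sum_congr rfl (fun j _ => by rw [show n+(j+1) = n+j+1 by omega])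
    have S2 : ∑ j ∈ Finset.range (k+1+1), (if j < k+1 then h j else 0) * qB (n+j) u
        = ∑ j ∈ Finset.range (k+1), h j * qB (n+j) u := by
      rw [Finset.sum_range_succ, if_neg (lt_irrefl (k+1)), zero_mul, add_zero]
      refine Finset.sum_congr rfl (fun j hj => ?_)
      rw [if_pos (Finset.mem_range.mp hj)]
    rw [step3, ← S1, ← S2, ← Finset.sum_sub_distrib]
    refine (Finset.sum_congr rfl (fun j hj => ?_)).symm
    have hj2 : j < k + 2 := Finset.mem_range.mp hj
    have hco : g x (k+1) j = (if j = 0 then 0 else h (j-1)) - (if j < k+1 then h j else 0) := by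
      rcases Nat.eq_zero_or_pos j with rfl | hj0
      · rw [if_pos rfl, if_pos (by omega), gam0, hh]
        simp only []
        push_cast
        ring
      · rcases Nat.lt_or_ge j (k+1) with hjk | hjk
        · -- middle: 1 ≤ j ≤ k
          obtain ⟨t, rfl⟩ : ∃ t, j = t + 1 := ⟨j - 1, by omega⟩
          obtain ⟨s, hs⟩ : ∃ s, k = t + s + 1 := ⟨k - t - 1, by omega⟩
          rw [if_neg (Nat.succ_ne_zero t), if_pos hjk, Nat.add_sub_cancel, hh]
          simp only []
          rw [hs, gammid x t s]
          push_cast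
          ring
        · have hj : j = k + 1 := by omega
          subst hj
          rw [if_neg (Nat.succ_ne_zero k), if_neg (lt_irrefl (k+1)), Nat.add_sub_cancel, hh]
          simp only []
          rw [gamtop x k]
          ring
    rw [hco]
    ring
theorem pow_mul_qBessel_expansion (n k : ℕ) (hk : k ≤ n) (u : ℝ) :
    u ^ (2 * k) * qBessel (n - k) u =
      ∑ i ∈ Finset.range (k + 1),
        (2 ^ (2 * k) * (k.choose i : ℝ) *
          (ascPochhammer ℝ (k + i)).eval ((n : ℝ) - k + 1 / 2) *
          (ascPochhammer ℝ (k - i)).eval (-(n : ℝ) - 1 / 2)) * qBessel (n + i) u := by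
  have h1 : u^(2*k) * qB (n-k) u = ∑ j ∈ Finset.range (k+1), g ((n:ℝ)+1/2) k j * qB (n+j) u :=
    key u k n hk
  rw [show qBessel (n-k) u = qB (n-k) u from rfl, h1]
  refine Finset.sum_congr rfl (fun i _ => ?_)
  rw [show qBessel (n+i) u = qB (n+i) u from rfl]
  unfold g P
  rw [show ((n:ℝ)+1/2) - (k:ℝ) = (n:ℝ) - k + 1/2 by ring,
      show -((n:ℝ)+1/2) = -(n:ℝ) - 1/2 by ring,
      show (4:ℝ)^k = 2^(2*k) by rw [pow_mul]; norm_num]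
end

section
/- For every nonnegative integer n and every real a with 0 \leq a \leq 1, there exist nonnegative real coefficients c_0, ..., c_n such that q_n(a u) = \sum_{k=0}^{n} c_k q_k(u) for all real u, and \sum_{k=0}^n c_k = 1. -/
open Finset

/-- Coefficient of `u^j` in `qBessel m`. -/
noncomputable def qA (m j : ℕ) : ℝ :=
  (m.factorial * (2 * m - j).factorial * 2 ^ j : ℝ) /
    ((2 * m).factorial * (m - j).factorial * j.factorial)

lemma qBessel_eq (m : ℕ) (u : ℝ) : qBessel m u = ∑ j ∈ range (m+1), qA m j * u ^ j := rfl

lemma qA_zero (m : ℕ) : qA m 0 = 1 := by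
  unfold qA
  have h1 : (0:ℝ) < m.factorial := by positivity
  have h2 : (0:ℝ) < (2*m).factorial := by positivity
  have e : 2*m - 0 = 2*m := by omega
  rw [e]
  norm_num [Nat.factorial]
  field_simp

lemma qBessel_zero (m : ℕ) : qBessel m 0 = 1 := by
  rw [qBessel_eq, Finset.sum_eq_single_of_mem 0 (by simp)]
  · simp [qA_zero]
  · intro j _ hj
    simp [zero_pow hj]

/-- Ballot-type numbers: coefficient of `x^t` in `c(x)^s` (Catalan g.f. power). -/
noncomputable def gb (t s : ℕ) : ℝ :=
  if s = 0 then (if t = 0 then 1 else 0)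
  else ((2 * t + s - 1).choose t : ℝ) - ((2 * t + s - 1).choose (t + s) : ℝ)

lemma gb_nonneg (t s : ℕ) : 0 ≤ gb t s := by
  unfold gb
  split
  · split <;> norm_num
  · rename_i hs
    rcases Nat.exists_eq_succ_of_ne_zero hs with ⟨s', rfl⟩
    rcases Nat.eq_zero_or_pos t with rfl | ht
    · simp [Nat.choose_eq_zero_of_lt (by omega : 2*0 + (s'+1) - 1 < 0 + (s'+1))]
    · have h1 : (2*t + (s'+1) - 1).choose (t + (s'+1)) = (2*t + (s'+1) - 1).choose (t - 1) := by
        rw [← Nat.choose_symm (by omega)]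
        congr 1
        omega
      rw [h1]
      have h2 : (2*t + (s'+1) - 1).choose (t-1) ≤ (2*t + (s'+1) - 1).choose t := by
        have := Nat.choose_le_succ_of_lt_half_left (r := t - 1) (n := 2*t + (s'+1) - 1) (by omega)
        have ht1 : t - 1 + 1 = t := by omega
        rwa [ht1] at this
      have := Nat.cast_le (α := ℝ).mpr h2
      linarith

lemma gb_zero (s : ℕ) : gb 0 s = 1 := by
  unfold gb
  rcases Nat.eq_zero_or_pos s with rfl | hs
  · simp
  · rw [if_neg (by omega)]
    have h0 : 2*0 + s - 1 = s - 1 := by omega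
    rw [h0]
    rw [Nat.choose_eq_zero_of_lt (by omega : s - 1 < 0 + s)]
    simp

lemma gb_succ_succ (t s : ℕ) : gb (t+1) (s+1) = gb (t+1) s + gb t (s+2) := by
  rcases Nat.eq_zero_or_pos s with rfl | hs
  · unfold gb
    norm_num
    have e1 : 2 * (t+1) = 2*t + 2 := by omega
    rw [e1]
    have p1 : (2*t+2).choose (t+1) = (2*t+1).choose t + (2*t+1).choose (t+1) :=
      Nat.choose_succ_succ (2*t+1) t
    have p2 : (2*t+2).choose (t+1+1) = (2*t+1).choose (t+1) + (2*t+1).choose (t+2) :=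
      Nat.choose_succ_succ (2*t+1) (t+1)
    rw [p1, p2]
    push_cast
    ring
  · rcases Nat.exists_eq_succ_of_ne_zero (Nat.pos_iff_ne_zero.mp hs) with ⟨s', rfl⟩
    unfold gb
    rw [if_neg (by omega), if_neg (by omega), if_neg (by omega)]
    have e1 : 2*(t+1) + (s'+1+1) - 1 = 2*t+s'+3 := by omega
    have e2 : 2*(t+1) + (s'+1) - 1 = 2*t+s'+2 := by omega
    have e3 : 2*t + (s'+1+2) - 1 = 2*t+s'+2 := by omega
    rw [e1, e2, e3]
    have p1 : (2*t+s'+3).choose (t+1) = (2*t+s'+2).choose t + (2*t+s'+2).choose (t+1) :=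
      Nat.choose_succ_succ (2*t+s'+2) t
    have e4 : t+1+(s'+1+1) = (t+(s'+1+2)-1) + 1 := by omega
    have p2 : (2*t+s'+3).choose (t+1+(s'+1+1)) =
        (2*t+s'+2).choose (t+s'+2) + (2*t+s'+2).choose (t+s'+3) := by
      rw [e4]
      have : t+(s'+1+2)-1 = t+s'+2 := by omega
      rw [this]
      exact Nat.choose_succ_succ (2*t+s'+2) (t+s'+2)
    rw [p1, p2]
    have e5 : t+1+(s'+1) = t+s'+2 := by omega
    have e6 : t+(s'+1+2) = t+s'+3 := by omega
    rw [e5, e6]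
    push_cast
    ring

lemma gb_conv (M : ℕ) : ∀ s j : ℕ,
    ∑ t ∈ range (M+1), gb t s * ((2*(M-t)+j).choose (M-t) : ℝ)
      = ((2*M+s+j).choose M : ℝ) := by
  induction M with
  | zero =>
    intro s j
    simp [gb_zero]
  | succ M ih =>
    intro s j
    induction s with
    | zero =>
      rw [Finset.sum_eq_single_of_mem 0 (by simp)]
      · simp [gb_zero]
      · intro t ht htne
        have : gb t 0 = 0 := by unfold gb; simp [htne]
        simp [this]
    | succ s ihs =>
      have key : ∑ t ∈ range (M+2), gb t (s+1) * ((2*(M+1-t)+j).choose (M+1-t) : ℝ)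
          = ∑ t ∈ range (M+2), gb t s * ((2*(M+1-t)+j).choose (M+1-t) : ℝ)
            + ∑ t ∈ range (M+2), (gb t (s+1) - gb t s) * ((2*(M+1-t)+j).choose (M+1-t) : ℝ) := by
        rw [← Finset.sum_add_distrib]
        congr 1; ext t; ring
      rw [key, ihs]
      have peel : ∑ t ∈ range (M+2), (gb t (s+1) - gb t s) * ((2*(M+1-t)+j).choose (M+1-t) : ℝ)
          = ∑ t ∈ range (M+1), (gb (t+1) (s+1) - gb (t+1) s) * ((2*(M+1-(t+1))+j).choose (M+1-(t+1)) : ℝ)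
            + (gb 0 (s+1) - gb 0 s) * ((2*(M+1)+j).choose (M+1) : ℝ) := by
        rw [Finset.sum_range_succ']
        norm_num
      rw [peel, gb_zero, gb_zero]
      have inner : ∑ t ∈ range (M+1), (gb (t+1) (s+1) - gb (t+1) s) * ((2*(M+1-(t+1))+j).choose (M+1-(t+1)) : ℝ)
          = ∑ t ∈ range (M+1), gb t (s+2) * ((2*(M-t)+j).choose (M-t) : ℝ) := by
        apply Finset.sum_congr rfl
        intro t ht
        have h1 : gb (t+1) (s+1) - gb (t+1) s = gb t (s+2) := by
          rw [gb_succ_succ]; ring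
        have h2 : M + 1 - (t+1) = M - t := by omega
        rw [h1, h2]
      rw [inner, ih (s+2) j]
      have e1 : 2*(M+1)+s+j = 2*M+s+j+2 := by omega
      have e2 : 2*M+(s+2)+j = 2*M+s+j+2 := by omega
      have e3 : 2*(M+1)+(s+1)+j = 2*M+s+j+3 := by omega
      rw [e1, e2, e3]
      have p : (2*M+s+j+3).choose (M+1) = (2*M+s+j+2).choose M + (2*M+s+j+2).choose (M+1) :=
        Nat.choose_succ_succ (2*M+s+j+2) M
      rw [p]
      push_cast
      ring

/-- `qA k j` rewritten via binomial: pointwise algebra. -/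
lemma choose_mul_qA (k j : ℕ) (hjk : j ≤ k) :
    (((2*k).choose k : ℝ)) * qA k j
      = 2^j / (j.factorial : ℝ) * ((2*k-j).choose (k-j) : ℝ) := by
  have h1 : ((2*k).choose k : ℝ) = ((2*k).factorial : ℝ) / (k.factorial * ((2*k - k).factorial)) :=
    Nat.cast_choose ℝ (by omega)
  have h2 : ((2*k-j).choose (k-j) : ℝ)
      = ((2*k-j).factorial : ℝ) / ((k-j).factorial * ((2*k-j - (k-j)).factorial)) :=
    Nat.cast_choose ℝ (by omega)
  have e1 : 2*k - k = k := by omega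
  have e2 : 2*k - j - (k - j) = k := by omega
  rw [h1, h2, e1, e2]
  unfold qA
  have f1 : (0:ℝ) < k.factorial := by positivity
  have f2 : (0:ℝ) < (2*k).factorial := by positivity
  have f3 : (0:ℝ) < (k-j).factorial := by positivity
  have f4 : (0:ℝ) < j.factorial := by positivity
  have f5 : (0:ℝ) < (2*k-j).factorial := by positivity
  field_simp

noncomputable def Lam (n i : ℕ) : ℝ :=
  (n.factorial * (2*n - i).factorial : ℝ) / ((2*n).factorial * (n - i).factorial)

lemma Lam_nonneg (n i : ℕ) : 0 ≤ Lam n i := by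
  unfold Lam
  positivity

/-- The key connection-coefficient identity. -/
lemma CI (n i j : ℕ) (hij : j ≤ i) (hin : i ≤ n) :
    ∑ k ∈ Icc j i, (Lam n i * ((2*k).choose k : ℝ) * gb (i-k) (2*(n-i))) * qA k j
      = ((n-j).choose (i-j) : ℝ) * qA n j := by
  have step1 : ∑ k ∈ Icc j i, (Lam n i * ((2*k).choose k : ℝ) * gb (i-k) (2*(n-i))) * qA k j
      = Lam n i * (2^j / (j.factorial : ℝ)) *
          ∑ k ∈ Icc j i, gb (i-k) (2*(n-i)) * ((2*k-j).choose (k-j) : ℝ) := by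
    rw [Finset.mul_sum]
    apply Finset.sum_congr rfl
    intro k hk
    rw [Finset.mem_Icc] at hk
    have h := choose_mul_qA k j hk.1
    calc (Lam n i * ((2*k).choose k : ℝ) * gb (i-k) (2*(n-i))) * qA k j
        = Lam n i * gb (i-k) (2*(n-i)) * (((2*k).choose k : ℝ) * qA k j) := by ring
      _ = Lam n i * gb (i-k) (2*(n-i)) * (2^j / (j.factorial : ℝ) * ((2*k-j).choose (k-j) : ℝ)) := by rw [h]
      _ = Lam n i * (2^j / (j.factorial : ℝ)) * (gb (i-k) (2*(n-i)) * ((2*k-j).choose (k-j) : ℝ)) := by ring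
  rw [step1]
  have step2 : ∑ k ∈ Icc j i, gb (i-k) (2*(n-i)) * ((2*k-j).choose (k-j) : ℝ)
      = ∑ t ∈ range (i-j+1), gb t (2*(n-i)) * ((2*((i-j)-t)+j).choose ((i-j)-t) : ℝ) := by
    apply Finset.sum_nbij' (fun k => i - k) (fun t => i - t)
    · intro k hk; rw [Finset.mem_Icc] at hk; rw [Finset.mem_range]; omega
    · intro t ht; rw [Finset.mem_range] at ht; rw [Finset.mem_Icc]; omega
    · intro k hk; rw [Finset.mem_Icc] at hk; omega
    · intro t ht; rw [Finset.mem_range] at ht; omega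
    · intro k hk
      rw [Finset.mem_Icc] at hk
      have e1 : (i-j) - (i-k) = k - j := by omega
      have e2 : 2*(k-j)+j = 2*k - j := by omega
      rw [e1, e2]
  rw [step2, gb_conv (i-j) (2*(n-i)) j]
  have e3 : 2*(i-j)+2*(n-i)+j = 2*n - j := by omega
  rw [e3]
  have hc1 : ((2*n-j).choose (i-j) : ℝ)
      = ((2*n-j).factorial : ℝ) / ((i-j).factorial * ((2*n-i).factorial)) := by
    rw [Nat.cast_choose ℝ (by omega : i-j ≤ 2*n-j)]
    have : 2*n-j - (i-j) = 2*n-i := by omega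
    rw [this]
  have hc2 : ((n-j).choose (i-j) : ℝ)
      = ((n-j).factorial : ℝ) / ((i-j).factorial * ((n-i).factorial)) := by
    rw [Nat.cast_choose ℝ (by omega : i-j ≤ n-j)]
    have : n-j - (i-j) = n-i := by omega
    rw [this]
  rw [hc1, hc2]
  unfold Lam qA
  have f1 : (0:ℝ) < (n.factorial : ℝ) := by positivity
  have f2 : (0:ℝ) < ((2*n).factorial : ℝ) := by positivity
  have f3 : (0:ℝ) < ((n-i).factorial : ℝ) := by positivity
  have f4 : (0:ℝ) < ((n-j).factorial : ℝ) := by positivity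
  have f5 : (0:ℝ) < ((2*n-i).factorial : ℝ) := by positivity
  have f6 : (0:ℝ) < ((2*n-j).factorial : ℝ) := by positivity
  have f7 : (0:ℝ) < ((i-j).factorial : ℝ) := by positivity
  have f8 : (0:ℝ) < (j.factorial : ℝ) := by positivity
  field_simp

lemma binom_decomp (n j : ℕ) (hj : j ≤ n) (a : ℝ) :
    a ^ j = ∑ i ∈ Icc j n, ((n-j).choose (i-j) : ℝ) * (a^i * (1-a)^(n-i)) := by
  have h1 : ∑ i ∈ Icc j n, ((n-j).choose (i-j) : ℝ) * (a^i * (1-a)^(n-i))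
      = ∑ l ∈ range (n-j+1), ((n-j).choose l : ℝ) * (a^(j+l) * (1-a)^((n-j)-l)) := by
    apply Finset.sum_nbij' (fun i => i - j) (fun l => j + l)
    · intro i hi; rw [Finset.mem_Icc] at hi; rw [Finset.mem_range]; omega
    · intro l hl; rw [Finset.mem_range] at hl; rw [Finset.mem_Icc]; omega
    · intro i hi; rw [Finset.mem_Icc] at hi; omega
    · intro l hl; omega
    · intro i hi
      rw [Finset.mem_Icc] at hi
      have e1 : j + (i - j) = i := by omega
      have e2 : (n-j) - (i-j) = n - i := by omega
      rw [e1, e2]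
  rw [h1]
  have h2 : ∑ l ∈ range (n-j+1), ((n-j).choose l : ℝ) * (a^(j+l) * (1-a)^((n-j)-l))
      = a^j * ∑ l ∈ range (n-j+1), a^l * (1-a)^((n-j)-l) * ((n-j).choose l : ℝ) := by
    rw [Finset.mul_sum]
    apply Finset.sum_congr rfl
    intro l _
    rw [pow_add]
    ring
  rw [h2, ← add_pow a (1-a) (n-j)]
  norm_num

theorem qBessel_connection_nonneg (n : ℕ) (a : ℝ) (ha : 0 ≤ a) (ha' : a ≤ 1) :
    ∃ c : ℕ → ℝ, (∀ k, 0 ≤ c k) ∧ (∑ k ∈ Finset.range (n + 1), c k = 1) ∧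
      ∀ u : ℝ, qBessel n (a * u) = ∑ k ∈ Finset.range (n + 1), c k * qBessel k u := by
  set c : ℕ → ℝ := fun k => ∑ i ∈ range (n+1),
    (if k ≤ i then Lam n i * ((2*k).choose k : ℝ) * gb (i-k) (2*(n-i)) else 0)
      * (a^i * (1-a)^(n-i)) with hc
  have hone : 0 ≤ 1 - a := by linarith
  have hcnonneg : ∀ k, 0 ≤ c k := by
    intro k
    apply Finset.sum_nonneg
    intro i _
    apply mul_nonneg
    · split
      · apply mul_nonneg
        · apply mul_nonneg (Lam_nonneg n i)
          positivity
        · exact gb_nonneg _ _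
      · exact le_refl 0
    · exact mul_nonneg (pow_nonneg ha i) (pow_nonneg hone _)
  have hmain : ∀ u : ℝ, qBessel n (a * u) = ∑ k ∈ Finset.range (n + 1), c k * qBessel k u := by
    intro u
    -- Step 1: expand and split a^j
    have h1 : qBessel n (a * u)
        = ∑ j ∈ range (n+1), ∑ i ∈ Icc j n,
            ((n-j).choose (i-j) : ℝ) * qA n j * u^j * (a^i * (1-a)^(n-i)) := by
      rw [qBessel_eq]
      apply Finset.sum_congr rfl
      intro j hj
      rw [Finset.mem_range] at hj
      have hjn : j ≤ n := by omega
      rw [mul_pow, binom_decomp n j hjn a, Finset.sum_mul, Finset.mul_sum]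
      apply Finset.sum_congr rfl
      intro i _
      ring
    -- Step 2: swap j and i
    have h2 : ∑ j ∈ range (n+1), ∑ i ∈ Icc j n,
            ((n-j).choose (i-j) : ℝ) * qA n j * u^j * (a^i * (1-a)^(n-i))
        = ∑ i ∈ range (n+1), ∑ j ∈ range (i+1),
            ((n-j).choose (i-j) : ℝ) * qA n j * u^j * (a^i * (1-a)^(n-i)) := by
      apply Finset.sum_comm'
      intro j i
      simp only [Finset.mem_range, Finset.mem_Icc]
      omega
    -- Step 3: apply CI to the inner sums
    have h3 : ∀ i ∈ range (n+1),
        ∑ j ∈ range (i+1), ((n-j).choose (i-j) : ℝ) * qA n j * u^j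
          = ∑ k ∈ range (i+1),
              (Lam n i * ((2*k).choose k : ℝ) * gb (i-k) (2*(n-i))) * qBessel k u := by
      intro i hi
      rw [Finset.mem_range] at hi
      have hin : i ≤ n := by omega
      have lhs_eq : ∑ j ∈ range (i+1), ((n-j).choose (i-j) : ℝ) * qA n j * u^j
          = ∑ j ∈ range (i+1), ∑ k ∈ Icc j i,
              ((Lam n i * ((2*k).choose k : ℝ) * gb (i-k) (2*(n-i))) * qA k j) * u^j := by
        apply Finset.sum_congr rfl
        intro j hj
        rw [Finset.mem_range] at hj
        rw [← Finset.sum_mul, CI n i j (by omega) hin]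
      rw [lhs_eq]
      have swap : ∑ j ∈ range (i+1), ∑ k ∈ Icc j i,
              ((Lam n i * ((2*k).choose k : ℝ) * gb (i-k) (2*(n-i))) * qA k j) * u^j
          = ∑ k ∈ range (i+1), ∑ j ∈ range (k+1),
              ((Lam n i * ((2*k).choose k : ℝ) * gb (i-k) (2*(n-i))) * qA k j) * u^j := by
        apply Finset.sum_comm'
        intro j k
        simp only [Finset.mem_range, Finset.mem_Icc]
        omega
      rw [swap]
      apply Finset.sum_congr rfl
      intro k _
      rw [qBessel_eq, Finset.mul_sum]
      apply Finset.sum_congr rfl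
      intro j _
      ring
    -- Step 4: assemble
    rw [h1, h2]
    have h4 : ∑ i ∈ range (n+1), ∑ j ∈ range (i+1),
            ((n-j).choose (i-j) : ℝ) * qA n j * u^j * (a^i * (1-a)^(n-i))
        = ∑ i ∈ range (n+1), ∑ k ∈ range (i+1),
            ((Lam n i * ((2*k).choose k : ℝ) * gb (i-k) (2*(n-i))) * qBessel k u)
              * (a^i * (1-a)^(n-i)) := by
      apply Finset.sum_congr rfl
      intro i hi
      rw [← Finset.sum_mul, h3 i hi, Finset.sum_mul]
    rw [h4]
    -- Step 5: swap i and k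
    have h5 : ∑ i ∈ range (n+1), ∑ k ∈ range (i+1),
            ((Lam n i * ((2*k).choose k : ℝ) * gb (i-k) (2*(n-i))) * qBessel k u)
              * (a^i * (1-a)^(n-i))
        = ∑ k ∈ range (n+1), ∑ i ∈ Icc k n,
            ((Lam n i * ((2*k).choose k : ℝ) * gb (i-k) (2*(n-i))) * qBessel k u)
              * (a^i * (1-a)^(n-i)) := by
      apply Finset.sum_comm'
      intro i k
      simp only [Finset.mem_range, Finset.mem_Icc]
      omega
    rw [h5]
    apply Finset.sum_congr rfl
    intro k hk
    have hIcc : Icc k n = (range (n+1)).filter (fun i => k ≤ i) := by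
      ext i
      simp only [Finset.mem_Icc, Finset.mem_filter, Finset.mem_range]
      omega
    have hck : c k = ∑ i ∈ Icc k n,
        (Lam n i * ((2*k).choose k : ℝ) * gb (i-k) (2*(n-i))) * (a^i * (1-a)^(n-i)) := by
      simp only [hc]
      rw [hIcc, Finset.sum_filter]
      apply Finset.sum_congr rfl
      intro i _
      split <;> ring
    rw [hck, Finset.sum_mul]
    apply Finset.sum_congr rfl
    intro i hi
    ring
  refine ⟨c, hcnonneg, ?_, hmain⟩
  have h0 := hmain 0
  rw [mul_zero, qBessel_zero] at h0
  rw [h0]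
  apply Finset.sum_congr rfl
  intro k _
  rw [qBessel_zero, mul_one]
end

section
/- For integers n, m \geq 1 and real a, the linearization coefficients satisfy the recursion \beta_{k+1}^{(n,m)}(a)/(2k+1) = (a^2/(2n-1)) \beta_k^{(n-1,m)}(a) + ((1-a)^2/(2m-1)) \beta_k^{(n,m-1)}(a) for k = 0, 1, ..., n+m-1, and moreover \beta_0^{(n,m)}(a) = 0. -/
open Finset

open Polynomial

/-- The coefficient `α_k^{(n)}` of the Bessel polynomial. -/
noncomputable def qbAlpha (n k : ℕ) : ℝ :=
  (n.factorial * (2 * n - k).factorial * 2 ^ k : ℝ) /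
    ((2 * n).factorial * (n - k).factorial * k.factorial)

/-- The Bessel polynomial as a `Polynomial ℝ`. -/
noncomputable def qbQ (n : ℕ) : Polynomial ℝ :=
  ∑ k ∈ Finset.range (n + 1), C (qbAlpha n k) * X ^ k

lemma qbAlpha_pos (n k : ℕ) : 0 < qbAlpha n k := by
  apply div_pos <;> positivity

lemma qbQ_coeff (n j : ℕ) : (qbQ n).coeff j = if j ≤ n then qbAlpha n j else 0 := by
  rw [qbQ, finset_sum_coeff]
  simp only [coeff_C_mul, coeff_X_pow, mul_ite, mul_one, mul_zero]
  rw [Finset.sum_ite_eq (Finset.range (n+1)) j (fun i => qbAlpha n i)]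
  simp [Nat.lt_succ_iff]

lemma qbAlpha_zero (n : ℕ) : qbAlpha n 0 = 1 := by
  have h1 : ((n).factorial : ℝ) ≠ 0 := by positivity
  have h2 : ((2*n).factorial : ℝ) ≠ 0 := by positivity
  simp [qbAlpha]
  field_simp

lemma qbAlpha_one (n : ℕ) (hn : 1 ≤ n) : qbAlpha n 1 = 1 := by
  obtain ⟨p, rfl⟩ : ∃ p, n = p + 1 := ⟨n - 1, by omega⟩
  have h1 : 2 * (p + 1) - 1 = 2 * p + 1 := by omega
  have h2 : p + 1 - 1 = p := by omega
  rw [qbAlpha, h1, h2]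
  rw [show 2 * (p+1) = (2*p+1) + 1 by ring, Nat.factorial_succ (2*p+1),
      Nat.factorial_succ p]
  push_cast
  have : ((2*p+1).factorial : ℝ) ≠ 0 := by positivity
  have : ((p).factorial : ℝ) ≠ 0 := by positivity
  field_simp
  ring

lemma qbAlpha_key (p d : ℕ) :
    (2*((p:ℝ)+d+2)-1) * (((p:ℝ)+2) * qbAlpha (p+d+2) (p+2)) + qbAlpha (p+d+1) p
      = (2*((p:ℝ)+d+2)-1) * qbAlpha (p+d+2) (p+1) := by
  have e1 : 2 * (p+d+2) - (p+2) = p+2*d+2 := by omega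
  have e2 : (p+d+2) - (p+2) = d := by omega
  have e3 : 2 * (p+d+1) - p = p+2*d+2 := by omega
  have e4 : (p+d+1) - p = d+1 := by omega
  have e5 : 2 * (p+d+2) - (p+1) = p+2*d+3 := by omega
  have e6 : (p+d+2) - (p+1) = d+1 := by omega
  rw [qbAlpha, qbAlpha, qbAlpha, e1, e2, e3, e4, e5, e6]
  rw [show p+d+2 = (p+d+1)+1 from rfl, show p+2*d+3 = (p+2*d+2)+1 from rfl,
      show 2*((p+d+1)+1) = (2*p+2*d+3)+1 by ring, show 2*(p+d+1) = 2*p+2*d+2 by ring,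
      show 2*p+2*d+3 = (2*p+2*d+2)+1 from rfl,
      show p+2 = (p+1)+1 from rfl]
  rw [Nat.factorial_succ (p+d+1), Nat.factorial_succ (p+2*d+2),
      Nat.factorial_succ ((2*p+2*d+2)+1), Nat.factorial_succ (2*p+2*d+2),
      Nat.factorial_succ (d), Nat.factorial_succ ((p+1)), Nat.factorial_succ p]
  push_cast
  have h1 : ((p+d+1).factorial : ℝ) ≠ 0 := by positivity
  have h2 : ((p+2*d+2).factorial : ℝ) ≠ 0 := by positivity
  have h3 : ((2*p+2*d+2).factorial : ℝ) ≠ 0 := by positivity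
  have h4 : ((d).factorial : ℝ) ≠ 0 := by positivity
  have h5 : ((p).factorial : ℝ) ≠ 0 := by positivity
  field_simp
  ring

lemma qbAlpha_top (d : ℕ) :
    qbAlpha d d = (2*((d:ℝ)+1)-1) * qbAlpha (d+1) (d+1) := by
  have e1 : 2*d - d = d := by omega
  have e2 : d - d = 0 := by omega
  have e3 : 2*(d+1) - (d+1) = d+1 := by omega
  have e4 : (d+1) - (d+1) = 0 := by omega
  rw [qbAlpha, qbAlpha, e1, e2, e3, e4]
  rw [show 2*(d+1) = (2*d+1)+1 by ring, Nat.factorial_succ (2*d+1),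
      show 2*d+1 = (2*d)+1 from rfl, Nat.factorial_succ (2*d),
      Nat.factorial_succ d]
  push_cast
  have h1 : ((d).factorial : ℝ) ≠ 0 := by positivity
  have h2 : ((2*d).factorial : ℝ) ≠ 0 := by positivity
  field_simp
  ring

lemma qbQ_deriv (n : ℕ) (hn : 1 ≤ n) :
    derivative (qbQ n) = qbQ n - C ((2*(n:ℝ)-1)⁻¹) * (X * qbQ (n-1)) := by
  ext j
  rw [coeff_derivative, coeff_sub, coeff_C_mul, qbQ_coeff]
  cases j with
  | zero =>
    rw [qbQ_coeff, mul_coeff_zero, coeff_X_zero, zero_mul, mul_zero, sub_zero,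
        if_pos hn, if_pos (Nat.zero_le n), qbAlpha_zero, qbAlpha_one n hn]
    norm_num
  | succ i =>
    rw [coeff_X_mul, qbQ_coeff, qbQ_coeff]
    by_cases hc : i + 2 ≤ n
    · rw [if_pos (by omega : i + 1 + 1 ≤ n), if_pos (by omega : i + 1 ≤ n),
          if_pos (by omega : i ≤ n - 1)]
      obtain ⟨d, rfl⟩ : ∃ d, n = i + d + 2 := ⟨n - i - 2, by omega⟩
      rw [show i + d + 2 - 1 = i + d + 1 by omega]
      have hi : (0:ℝ) ≤ i := Nat.cast_nonneg i
      have hd : (0:ℝ) ≤ d := Nat.cast_nonneg d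
      have hne : (2*((i:ℝ)+d+2)-1) ≠ 0 := by nlinarith
      have hkey := qbAlpha_key i d
      rw [show i + 1 + 1 = i + 2 from rfl]
      push_cast
      field_simp
      linear_combination hkey
    · by_cases hc2 : i + 1 = n
      · subst hc2
        rw [if_neg (by omega), if_pos (by omega), if_pos (by omega)]
        rw [show i + 1 - 1 = i by omega]
        have hi : (0:ℝ) ≤ i := Nat.cast_nonneg i
        have hne : (2*((i:ℝ)+1)-1) ≠ 0 := by nlinarith
        push_cast
        rw [qbAlpha_top i, inv_mul_cancel_left₀ hne]
        ring
      · rw [if_neg (by omega), if_neg (by omega), if_neg (by omega)]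
        simp

lemma qbQ_eval (n : ℕ) (u : ℝ) : (qbQ n).eval u = qBessel n u := by
  simp [qbQ, qBessel, qbAlpha, eval_finset_sum]

lemma qbQ_zero : qbQ 0 = 1 := by
  simp [qbQ, qbAlpha_zero]

lemma qbQ_indep (N : ℕ) (c : ℕ → ℝ)
    (h : ∑ k ∈ Finset.range N, C (c k) * qbQ k = 0) :
    ∀ k < N, c k = 0 := by
  induction N with
  | zero => intro k hk; omega
  | succ N ih =>
    have hN : c N = 0 := by
      have hco := congrArg (fun p => Polynomial.coeff p N) h
      simp only [finset_sum_coeff, coeff_C_mul, coeff_zero] at hco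
      rw [Finset.sum_range_succ] at hco
      have hz : ∀ k ∈ Finset.range N, c k * (qbQ k).coeff N = 0 := by
        intro k hk
        rw [qbQ_coeff, if_neg (by simp at hk; omega)]; ring
      rw [Finset.sum_eq_zero hz, zero_add, qbQ_coeff, if_pos le_rfl] at hco
      rcases mul_eq_zero.1 hco with h'|h'
      · exact h'
      · exact absurd h' (ne_of_gt (qbAlpha_pos N N))
    have h' : ∑ k ∈ Finset.range N, C (c k) * qbQ k = 0 := by
      rw [Finset.sum_range_succ, hN] at h
      simpa using h
    intro k hk
    rcases Nat.lt_succ_iff_lt_or_eq.1 hk with hlt|rfl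
    · exact ih h' k hlt
    · exact hN

lemma qbQ_deriv_succ (k : ℕ) :
    derivative (qbQ (k + 1)) = qbQ (k + 1) - C ((2*(k:ℝ)+1)⁻¹) * (X * qbQ k) := by
  have h := qbQ_deriv (k+1) (by omega)
  rw [show k + 1 - 1 = k from rfl,
      show (2*(((k+1):ℕ):ℝ)-1) = 2*(k:ℝ)+1 by push_cast; ring] at h
  exact h

theorem qBessel_linearization_recursion (n m : ℕ) (hn : 1 ≤ n) (hm : 1 ≤ m) (a : ℝ)
    (β β' β'' : ℕ → ℝ)
    (hβ : ∀ u : ℝ, qBessel n (a * u) * qBessel m ((1 - a) * u) =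
      ∑ k ∈ Finset.range (n + m + 1), β k * qBessel k u)
    (hβ' : ∀ u : ℝ, qBessel (n - 1) (a * u) * qBessel m ((1 - a) * u) =
      ∑ k ∈ Finset.range ((n - 1) + m + 1), β' k * qBessel k u)
    (hβ'' : ∀ u : ℝ, qBessel n (a * u) * qBessel (m - 1) ((1 - a) * u) =
      ∑ k ∈ Finset.range (n + (m - 1) + 1), β'' k * qBessel k u) :
    (∀ k < n + m, β (k + 1) / (2 * (k : ℝ) + 1) =
      a ^ 2 / (2 * (n : ℝ) - 1) * β' k + (1 - a) ^ 2 / (2 * (m : ℝ) - 1) * β'' k) ∧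
    β 0 = 0 := by
  set N := n + m with hN
  set A : Polynomial ℝ := (qbQ n).comp (C a * X) with hA
  set B : Polynomial ℝ := (qbQ m).comp (C (1-a) * X) with hB
  set A1 : Polynomial ℝ := (qbQ (n-1)).comp (C a * X) with hA1
  set B1 : Polynomial ℝ := (qbQ (m-1)).comp (C (1-a) * X) with hB1
  set γ : ℕ → ℝ := fun k => a ^ 2 / (2 * (n : ℝ) - 1) * β' k +
      (1 - a) ^ 2 / (2 * (m : ℝ) - 1) * β'' k with hγ
  -- polynomial versions of the hypotheses
  have hP : A * B = ∑ k ∈ Finset.range (N+1), C (β k) * qbQ k := by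
    apply Polynomial.funext
    intro u
    simp only [eval_mul, eval_comp, eval_C, eval_X, hA, hB, eval_finset_sum, qbQ_eval]
    exact hβ u
  have hP1 : A1 * B = ∑ k ∈ Finset.range N, C (β' k) * qbQ k := by
    apply Polynomial.funext
    intro u
    simp only [eval_mul, eval_comp, eval_C, eval_X, hA1, hB, eval_finset_sum, qbQ_eval]
    rw [show N = (n-1) + m + 1 by omega]
    exact hβ' u
  have hP2 : A * B1 = ∑ k ∈ Finset.range N, C (β'' k) * qbQ k := by
    apply Polynomial.funext
    intro u
    simp only [eval_mul, eval_comp, eval_C, eval_X, hA, hB1, eval_finset_sum, qbQ_eval]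
    rw [show N = n + (m-1) + 1 by omega]
    exact hβ'' u
  -- derivative identities at the composed level
  have hin : ((2:ℝ)*(n:ℝ)-1) ≠ 0 := by
    have : (1:ℝ) ≤ (n:ℝ) := by exact_mod_cast hn
    nlinarith
  have him : ((2:ℝ)*(m:ℝ)-1) ≠ 0 := by
    have : (1:ℝ) ≤ (m:ℝ) := by exact_mod_cast hm
    nlinarith
  have hdA : derivative A = C a * A - C (a^2/(2*(n:ℝ)-1)) * (X * A1) := by
    rw [hA, derivative_comp, qbQ_deriv n hn]
    simp only [sub_comp, mul_comp, C_comp, X_comp]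
    have hd : derivative (C a * X : Polynomial ℝ) = C a := by simp
    rw [hd]
    rw [show (C (a^2/(2*(n:ℝ)-1)) : Polynomial ℝ)
        = C a * (C ((2*(n:ℝ)-1)⁻¹) * C a) by
      rw [← C_mul, ← C_mul]; congr 1; field_simp]
    rw [← hA1]
    ring
  have hdB : derivative B = C (1-a) * B - C ((1-a)^2/(2*(m:ℝ)-1)) * (X * B1) := by
    rw [hB, derivative_comp, qbQ_deriv m hm]
    simp only [sub_comp, mul_comp, C_comp, X_comp]
    have hd : derivative (C (1-a) * X : Polynomial ℝ) = C (1-a) := by simp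
    rw [hd]
    rw [show (C ((1-a)^2/(2*(m:ℝ)-1)) : Polynomial ℝ)
        = C (1-a) * (C ((2*(m:ℝ)-1)⁻¹) * C (1-a)) by
      rw [← C_mul, ← C_mul]; congr 1; field_simp]
    rw [← hB1]
    ring
  -- the master identity
  have hmain : A * B - derivative (A * B)
      = C (a^2/(2*(n:ℝ)-1)) * (X * (A1 * B)) + C ((1-a)^2/(2*(m:ℝ)-1)) * (X * (A * B1)) := by
    rw [derivative_mul, hdA, hdB]
    have hCa : (C (1-a) : Polynomial ℝ) = 1 - C a := by
      rw [C_sub, C_1]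
    rw [hCa]
    ring
  -- rewrite the left side as a sum
  have hQ0 : qbQ 0 - derivative (qbQ 0) = 1 := by
    rw [qbQ_zero]; simp
  have hL : A * B - derivative (A * B)
      = C (β 0) + X * (∑ k ∈ Finset.range N, C (β (k+1) * (2*(k:ℝ)+1)⁻¹) * qbQ k) := by
    rw [hP, derivative_sum, ← Finset.sum_sub_distrib, Finset.sum_range_succ']
    have hs : ∀ k ∈ Finset.range N,
        C (β (k+1)) * qbQ (k+1) - derivative (C (β (k+1)) * qbQ (k+1))
          = X * (C (β (k+1) * (2*(k:ℝ)+1)⁻¹) * qbQ k) := by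
      intro k _
      rw [derivative_C_mul, qbQ_deriv_succ k, C_mul]
      ring
    rw [Finset.sum_congr rfl hs, ← Finset.mul_sum]
    have h0 : C (β 0) * qbQ 0 - derivative (C (β 0) * qbQ 0) = C (β 0) := by
      rw [derivative_C_mul, ← mul_sub, hQ0, mul_one]
    rw [h0]
    ring
  -- rewrite the right side as a sum
  have hR : C (a^2/(2*(n:ℝ)-1)) * (X * (A1 * B)) + C ((1-a)^2/(2*(m:ℝ)-1)) * (X * (A * B1))
      = X * (∑ k ∈ Finset.range N, C (γ k) * qbQ k) := by
    rw [hP1, hP2, Finset.mul_sum, Finset.mul_sum, Finset.mul_sum, Finset.mul_sum,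
        Finset.mul_sum, ← Finset.sum_add_distrib]
    apply Finset.sum_congr rfl
    intro k _
    rw [hγ]
    simp only []
    rw [show (C (a ^ 2 / (2 * (n:ℝ) - 1) * β' k + (1 - a) ^ 2 / (2 * (m:ℝ) - 1) * β'' k)
        : Polynomial ℝ)
        = C (a^2/(2*(n:ℝ)-1)) * C (β' k) + C ((1-a)^2/(2*(m:ℝ)-1)) * C (β'' k) by
      rw [← C_mul, ← C_mul, ← C_add]]
    ring
  have hE : C (β 0) + X * (∑ k ∈ Finset.range N, C (β (k+1) * (2*(k:ℝ)+1)⁻¹) * qbQ k)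
      = X * (∑ k ∈ Finset.range N, C (γ k) * qbQ k) := by
    rw [← hL, hmain, hR]
  -- extract β 0 = 0
  have hβ0 : β 0 = 0 := by
    have hco := congrArg (fun p => Polynomial.coeff p 0) hE
    simpa [mul_coeff_zero] using hco
  -- cancel X and use independence
  have hS : (∑ k ∈ Finset.range N, C (β (k+1) * (2*(k:ℝ)+1)⁻¹) * qbQ k)
      = ∑ k ∈ Finset.range N, C (γ k) * qbQ k := by
    apply mul_left_cancel₀ (X_ne_zero (R := ℝ))
    rw [← hE, hβ0]
    simp
  have hz : ∑ k ∈ Finset.range N,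
      C (β (k+1) * (2*(k:ℝ)+1)⁻¹ - γ k) * qbQ k = 0 := by
    have : ∀ k ∈ Finset.range N,
        C (β (k+1) * (2*(k:ℝ)+1)⁻¹ - γ k) * qbQ k
          = C (β (k+1) * (2*(k:ℝ)+1)⁻¹) * qbQ k - C (γ k) * qbQ k := by
      intro k _
      rw [C_sub, sub_mul]
    rw [Finset.sum_congr rfl this, Finset.sum_sub_distrib, hS, sub_self]
  have hind := qbQ_indep N _ hz
  constructor
  · intro k hk
    have h := hind k hk
    have hkne : (2*(k:ℝ)+1) ≠ 0 := by positivity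
    rw [sub_eq_zero] at h
    rw [div_eq_mul_inv]
    exact h
  · exact hβ0
end

section
/- For nonnegative integers n, i, j with i + j \leq n, the sum S = \sum_{l=j}^{n-i} ((2n-i-l)! * (-n-1/2)_l) / ((n-i-l)! * (l-j)!) equals ((2n-2i)!/(n-i)!) * 2^{2i-2n} * (-1)^j * j! * i! * C(2n+1, 2j) * C(n-j, i). -/
open Finset

section Aux
open Polynomial

-- Vandermonde identity for ascending Pochhammer
lemma ascVand (x y : ℝ) : ∀ a : ℕ, (ascPochhammer ℝ a).eval (x + y) =
    ∑ m ∈ Finset.range (a + 1),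
      (a.choose m : ℝ) * (ascPochhammer ℝ m).eval x * (ascPochhammer ℝ (a - m)).eval y := by
  intro a
  induction a with
  | zero => simp
  | succ a ih =>
    rw [ascPochhammer_succ_eval, ih, Finset.sum_mul]
    have key : ∀ m ∈ Finset.range (a + 1),
        (a.choose m : ℝ) * (ascPochhammer ℝ m).eval x * (ascPochhammer ℝ (a - m)).eval y
            * (x + y + (a : ℝ))
          = (a.choose m : ℝ) * (ascPochhammer ℝ (m + 1)).eval x
              * (ascPochhammer ℝ (a - m)).eval y
            + (a.choose m : ℝ) * (ascPochhammer ℝ m).eval x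
              * (ascPochhammer ℝ (a - m + 1)).eval y := by
      intro m hm
      rw [Finset.mem_range] at hm
      have hma : m ≤ a := Nat.lt_succ_iff.mp hm
      have hcast : ((a - m : ℕ) : ℝ) = (a : ℝ) - m := by
        push_cast [Nat.cast_sub hma]; ring
      rw [ascPochhammer_succ_eval, ascPochhammer_succ_eval, hcast]
      ring
    rw [Finset.sum_congr rfl key, Finset.sum_add_distrib]
    rw [Finset.sum_range_succ' (fun m => ((a + 1).choose m : ℝ) * (ascPochhammer ℝ m).eval x
      * (ascPochhammer ℝ (a + 1 - m)).eval y) (a + 1)]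
    have e1 : ∀ m ∈ Finset.range (a + 1),
        (((a + 1).choose (m + 1) : ℕ) : ℝ) * (ascPochhammer ℝ (m + 1)).eval x
            * (ascPochhammer ℝ (a + 1 - (m + 1))).eval y
          = (a.choose m : ℝ) * (ascPochhammer ℝ (m + 1)).eval x
              * (ascPochhammer ℝ (a - m)).eval y
            + (a.choose (m + 1) : ℝ) * (ascPochhammer ℝ (m + 1)).eval x
              * (ascPochhammer ℝ (a - m)).eval y := by
      intro m hm
      have : a + 1 - (m + 1) = a - m := by omega
      rw [this, Nat.choose_succ_succ]
      push_cast
      ring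
    rw [Finset.sum_congr rfl e1, Finset.sum_add_distrib]
    have e2 : ∑ m ∈ Finset.range (a + 1), (a.choose m : ℝ) * (ascPochhammer ℝ m).eval x
        * (ascPochhammer ℝ (a - m + 1)).eval y
        = ∑ m ∈ Finset.range (a + 1), (a.choose (m + 1) : ℝ) * (ascPochhammer ℝ (m + 1)).eval x
            * (ascPochhammer ℝ (a - m)).eval y
          + ((a + 1).choose 0 : ℝ) * (ascPochhammer ℝ 0).eval x
            * (ascPochhammer ℝ (a + 1 - 0)).eval y := by
      rw [Finset.sum_range_succ' (fun m => (a.choose m : ℝ) * (ascPochhammer ℝ m).eval x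
        * (ascPochhammer ℝ (a - m + 1)).eval y) a]
      rw [Finset.sum_range_succ (fun m => (a.choose (m + 1) : ℝ) * (ascPochhammer ℝ (m + 1)).eval x
        * (ascPochhammer ℝ (a - m)).eval y) a]
      rw [Nat.choose_succ_self]
      have e3 : ∀ m ∈ Finset.range a,
          (a.choose (m + 1) : ℝ) * (ascPochhammer ℝ (m + 1)).eval x
            * (ascPochhammer ℝ (a - (m + 1) + 1)).eval y
          = (a.choose (m + 1) : ℝ) * (ascPochhammer ℝ (m + 1)).eval x
            * (ascPochhammer ℝ (a - m)).eval y := by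
        intro m hm
        rw [Finset.mem_range] at hm
        have : a - (m + 1) + 1 = a - m := by omega
        rw [this]
      rw [Finset.sum_congr rfl e3]
      simp
    rw [e2]
    ring

lemma asc_half (k : ℕ) : ∀ t : ℕ, (ascPochhammer ℝ t).eval ((k : ℝ) + 1 / 2) =
    ((2 * k + 2 * t).factorial : ℝ) * k.factorial /
      ((2 * k).factorial * (k + t).factorial * 4 ^ t) := by
  intro t
  induction t with
  | zero =>
    have h2 : ((2 * k).factorial : ℝ) ≠ 0 := Nat.cast_ne_zero.2 (Nat.factorial_ne_zero _)
    have hk : (k.factorial : ℝ) ≠ 0 := Nat.cast_ne_zero.2 (Nat.factorial_ne_zero _)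
    simp [Nat.mul_zero, Nat.add_zero]
    field_simp
  | succ t ih =>
    rw [ascPochhammer_succ_eval, ih]
    have h1 : (2 * k + 2 * (t + 1)).factorial
        = (2 * k + 2 * t + 2) * ((2 * k + 2 * t + 1) * (2 * k + 2 * t).factorial) := by
      have : 2 * k + 2 * (t + 1) = (2 * k + 2 * t + 1) + 1 := by ring
      rw [this, Nat.factorial_succ, Nat.factorial_succ]
    have h2 : (k + (t + 1)).factorial = (k + t + 1) * (k + t).factorial := by
      have : k + (t + 1) = (k + t) + 1 := by ring
      rw [this, Nat.factorial_succ]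
    rw [h1, h2]
    have n1 : ((2 * k).factorial : ℝ) ≠ 0 := Nat.cast_ne_zero.2 (Nat.factorial_ne_zero _)
    have n2 : ((k + t).factorial : ℝ) ≠ 0 := Nat.cast_ne_zero.2 (Nat.factorial_ne_zero _)
    have n3 : ((4 : ℝ)) ≠ 0 := by norm_num
    have n4 : ((4 : ℝ)) ^ t ≠ 0 := pow_ne_zero _ n3
    have n5 : ((k : ℝ) + t + 1) ≠ 0 := by positivity
    push_cast
    field_simp
    ring

lemma asc_neg_half (n : ℕ) : ∀ j : ℕ, j ≤ n →
    (ascPochhammer ℝ j).eval (-(n : ℝ) - 1 / 2) =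
    (-1) ^ j * ((2 * n + 1).factorial : ℝ) * ((n - j).factorial : ℝ) /
      ((n.factorial : ℝ) * ((2 * n + 1 - 2 * j).factorial : ℝ) * 4 ^ j) := by
  intro j
  induction j with
  | zero =>
    intro _
    simp only [ascPochhammer_zero, eval_one, pow_zero, Nat.sub_zero, Nat.mul_zero, pow_zero,
      one_mul, mul_one]
    have nn : ((2 * n + 1).factorial : ℝ) ≠ 0 := Nat.cast_ne_zero.2 (Nat.factorial_ne_zero _)
    have nf : ((n.factorial : ℝ)) ≠ 0 := Nat.cast_ne_zero.2 (Nat.factorial_ne_zero _)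
    field_simp
  | succ j ih =>
    intro hj
    have hj' : j ≤ n := by omega
    rw [ascPochhammer_succ_eval, ih hj']
    set u := n - (j + 1) with hu
    have e1 : n - j = u + 1 := by omega
    have e2 : 2 * n + 1 - 2 * j = 2 * u + 3 := by omega
    have e3 : 2 * n + 1 - 2 * (j + 1) = 2 * u + 1 := by omega
    have hn : (n : ℝ) = (u : ℝ) + j + 1 := by
      have : n = u + j + 1 := by omega
      rw [this]; push_cast; ring
    rw [e1, e2, e3]
    have f1 : ((u + 1).factorial : ℝ) = (u + 1) * u.factorial := by
      rw [Nat.factorial_succ]; push_cast; ring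
    have f2 : ((2 * u + 3).factorial : ℝ) = (2 * u + 3) * ((2 * u + 2) * (2 * u + 1).factorial) := by
      have : 2 * u + 3 = (2 * u + 2) + 1 := by ring
      rw [this, Nat.factorial_succ, Nat.factorial_succ]; push_cast; ring
    rw [f1, f2, hn]
    have n1 : ((n.factorial : ℝ)) ≠ 0 := Nat.cast_ne_zero.2 (Nat.factorial_ne_zero _)
    have n2 : ((2 * u + 1).factorial : ℝ) ≠ 0 := Nat.cast_ne_zero.2 (Nat.factorial_ne_zero _)
    have n3 : ((4 : ℝ)) ^ j ≠ 0 := pow_ne_zero _ (by norm_num)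
    have n4 : ((u : ℝ) + 1) ≠ 0 := by positivity
    have n5 : (2 * (u : ℝ) + 3) ≠ 0 := by positivity
    have n6 : (2 * (u : ℝ) + 2) ≠ 0 := by positivity
    field_simp
    ring

end Aux

theorem chu_vandermonde_sum (n i j : ℕ) (hij : i + j ≤ n) :
    ∑ l ∈ Finset.Icc j (n - i),
        ((2 * n - i - l).factorial : ℝ) * (ascPochhammer ℝ l).eval (-(n : ℝ) - 1 / 2) /
          ((n - i - l).factorial * (l - j).factorial) =
      ((2 * n - 2 * i).factorial : ℝ) / (n - i).factorial * 2 ^ (2 * i) / 2 ^ (2 * n) *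
        (-1) ^ j * j.factorial * i.factorial * ((2 * n + 1).choose (2 * j)) *
        ((n - j).choose i) := by
  set z : ℝ := -(n : ℝ) - 1 / 2 with hz
  set a := n - i - j with ha
  rw [← Finset.Ico_add_one_right_eq_Icc, Finset.sum_Ico_eq_sum_range]
  have hcard : n - i + 1 - j = a + 1 := by omega
  rw [hcard]
  have hterm : ∀ m ∈ Finset.range (a + 1),
      ((2 * n - i - (j + m)).factorial : ℝ) * (ascPochhammer ℝ (j + m)).eval z /
        ((n - i - (j + m)).factorial * ((j + m) - j).factorial)
      = ((n.factorial : ℝ) * (ascPochhammer ℝ j).eval z / a.factorial) *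
          ((a.choose m : ℝ) * (ascPochhammer ℝ m).eval (z + j) *
            (ascPochhammer ℝ (a - m)).eval ((n : ℝ) + 1)) := by
    intro m hm
    rw [Finset.mem_range] at hm
    have hma : m ≤ a := by omega
    have i1 : 2 * n - i - (j + m) = n + (a - m) := by omega
    have i2 : n - i - (j + m) = a - m := by omega
    have i3 : (j + m) - j = m := by omega
    rw [i1, i2, i3]
    have hsplit : (ascPochhammer ℝ (j + m)).eval z
        = (ascPochhammer ℝ j).eval z * (ascPochhammer ℝ m).eval (z + j) := by
      rw [← ascPochhammer_mul, Polynomial.eval_mul, Polynomial.eval_comp]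
      simp
    have hfac : ((n + (a - m)).factorial : ℝ)
        = (n.factorial : ℝ) * (ascPochhammer ℝ (a - m)).eval ((n : ℝ) + 1) := by
      rw [factorial_mul_ascPochhammer]
    have hchoose : ((a.choose m : ℝ)) * m.factorial * (a - m).factorial = a.factorial := by
      exact_mod_cast congrArg (Nat.cast : ℕ → ℝ) (Nat.choose_mul_factorial_mul_factorial hma)
    have n1 : ((a - m).factorial : ℝ) ≠ 0 := Nat.cast_ne_zero.2 (Nat.factorial_ne_zero _)
    have n2 : ((m).factorial : ℝ) ≠ 0 := Nat.cast_ne_zero.2 (Nat.factorial_ne_zero _)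
    have n3 : ((a).factorial : ℝ) ≠ 0 := Nat.cast_ne_zero.2 (Nat.factorial_ne_zero _)
    have n0 : ((a.choose m : ℕ) : ℝ) ≠ 0 := Nat.cast_ne_zero.2 (Nat.choose_pos hma).ne'
    rw [hsplit, hfac, ← hchoose]
    field_simp
  rw [Finset.sum_congr rfl hterm, ← Finset.mul_sum, ← ascVand (z + (j : ℝ)) ((n : ℝ) + 1) a]
  have hxy : z + (j : ℝ) + ((n : ℝ) + 1) = (j : ℝ) + 1 / 2 := by rw [hz]; ring
  rw [hxy, asc_half j a, asc_neg_half n j (by omega)]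
  -- index simplifications
  have e1 : j + a = n - i := by omega
  have e2 : 2 * j + 2 * a = 2 * n - 2 * i := by omega
  rw [e1, e2]
  -- choose values
  have hc1p : ((2 * n + 1).choose (2 * j) : ℝ) * (2 * j).factorial
      * (2 * n + 1 - 2 * j).factorial = (2 * n + 1).factorial := by
    exact_mod_cast Nat.choose_mul_factorial_mul_factorial (show 2 * j ≤ 2 * n + 1 by omega)
  have hc1 : ((2 * n + 1).choose (2 * j) : ℝ)
      = ((2 * n + 1).factorial : ℝ) / ((2 * j).factorial * (2 * n + 1 - 2 * j).factorial) := by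
    rw [eq_div_iff (by positivity)]
    linear_combination hc1p
  have hc2p : ((n - j).choose i : ℝ) * i.factorial * a.factorial = (n - j).factorial := by
    have h := Nat.choose_mul_factorial_mul_factorial (show i ≤ n - j by omega)
    have e : n - j - i = a := by omega
    rw [e] at h
    exact_mod_cast h
  have hc2 : ((n - j).choose i : ℝ)
      = ((n - j).factorial : ℝ) / (i.factorial * a.factorial) := by
    rw [eq_div_iff (by positivity)]
    linear_combination hc2p
  rw [hc1, hc2]
  have hpow : ((2 : ℝ)) ^ (2 * n) = 2 ^ (2 * i) * 4 ^ j * 4 ^ a := by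
    have h4 : (4 : ℝ) = 2 ^ 2 := by norm_num
    rw [h4, ← pow_mul, ← pow_mul, ← pow_add, ← pow_add]
    congr 1
    omega
  rw [hpow]
  have n1 : ((n.factorial : ℝ)) ≠ 0 := Nat.cast_ne_zero.2 (Nat.factorial_ne_zero _)
  have n2 : ((a.factorial : ℝ)) ≠ 0 := Nat.cast_ne_zero.2 (Nat.factorial_ne_zero _)
  have n3 : (((2 * n + 1 - 2 * j).factorial : ℝ)) ≠ 0 := Nat.cast_ne_zero.2 (Nat.factorial_ne_zero _)
  have n4 : (((2 * j).factorial : ℝ)) ≠ 0 := Nat.cast_ne_zero.2 (Nat.factorial_ne_zero _)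
  have n5 : (((n - i).factorial : ℝ)) ≠ 0 := Nat.cast_ne_zero.2 (Nat.factorial_ne_zero _)
  have n6 : (((n - j).factorial : ℝ)) ≠ 0 := Nat.cast_ne_zero.2 (Nat.factorial_ne_zero _)
  have n7 : ((i.factorial : ℝ)) ≠ 0 := Nat.cast_ne_zero.2 (Nat.factorial_ne_zero _)
  have n8 : ((4 : ℝ)) ^ j ≠ 0 := pow_ne_zero _ (by norm_num)
  have n9 : ((4 : ℝ)) ^ a ≠ 0 := pow_ne_zero _ (by norm_num)
  have n10 : ((2 : ℝ)) ^ (2 * i) ≠ 0 := pow_ne_zero _ (by norm_num)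
  field_simp
end

section
/- For every real \nu > 0 and every nonnegative integer j with j < \nu, and every u > 0: u^{\nu+j} K_{\nu-j}(u) = \sum_{i=0}^{j} (-2)^{j-i} C(j,i) * (\Gamma(\nu+1)/\Gamma(\nu+1-(j-i))) * u^{\nu+i} K_{\nu+i}(u), where K_\mu is the modified Bessel function of the third kind. -/
/-!
Integrating by parts against `d/dt exp(-u cosh t) = -u sinh t exp(-u cosh t)` and using
`cosh((ν ± 1)t) = cosh νt cosh t ± sinh νt sinh t` gives `K_{ν-1} = K_{ν+1} - (2ν/u) K_ν`.
Hence `h_j(ν) := u^{ν+j} K_{ν-j}(u)` satisfies `h_{j+1}(ν) = h_j(ν+1) - 2(ν-j) h_j(ν)`,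
and this recurrence is solved by binomial coefficients times the falling factorials
`ν(ν-1)⋯(ν-m+1) = Γ(ν+1)/Γ(ν+1-m)`.
-/

open Finset

/-- The modified Bessel function of the third kind `K`, via its integral
representation. -/
noncomputable def besselK (nu u : ℝ) : ℝ :=
  ∫ t in Set.Ioi (0 : ℝ), Real.exp (-u * Real.cosh t) * Real.cosh (nu * t)

open Polynomial Real Filter MeasureTheory Set Topology Asymptotics

section DescCoeff

variable {R : Type*} [CommRing R]

noncomputable def descCoeff (a : R) (j i : ℕ) (x : R) : R :=
  a ^ (j - i) * j.choose i * (descPochhammer R (j - i)).eval x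

variable (a x : R) (j : ℕ)

lemma descCoeff_succ_zero :
    descCoeff a (j + 1) 0 x = a * (x - j) * descCoeff a j 0 x := by
  simp only [descCoeff, Nat.sub_zero, Nat.choose_zero_right, descPochhammer_succ_eval, pow_succ]
  ring

lemma descCoeff_self_succ : descCoeff a j (j + 1) x = 0 := by
  simp [descCoeff, Nat.choose_succ_self]

lemma descCoeff_succ_succ {i : ℕ} (hi : i ≤ j) :
    descCoeff a (j + 1) (i + 1) x =
      descCoeff a j i (x + 1) + a * (x - j) * descCoeff a j (i + 1) x := by
  obtain ⟨m, rfl⟩ := Nat.exists_eq_add_of_le hi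
  rcases m with _ | m
  · simp [descCoeff, Nat.choose_succ_self]
  have hchoose :
      ((i + (m + 1)).choose (i + 1) : R) * (i + 1) = (i + (m + 1)).choose i * (m + 1) := by
    have := congrArg (Nat.cast : ℕ → R) (Nat.choose_succ_right_eq (i + (m + 1)) i)
    rw [show i + (m + 1) - i = m + 1 by omega] at this
    push_cast at this
    exact this
  have hpascal : ((i + (m + 1) + 1).choose (i + 1) : R) =
      (i + (m + 1)).choose i + (i + (m + 1)).choose (i + 1) := by
    simpa using congrArg (Nat.cast : ℕ → R) (Nat.choose_succ_succ (i + (m + 1)) i)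
  have hshift :
      (descPochhammer R (m + 1)).eval (x + 1) = (x + 1) * (descPochhammer R m).eval x := by
    simp [descPochhammer_succ_left]
  simp only [descCoeff, show i + (m + 1) + 1 - (i + 1) = m + 1 by omega,
    show i + (m + 1) - i = m + 1 by omega, show i + (m + 1) - (i + 1) = m by omega,
    descPochhammer_succ_eval, hshift, hpascal, pow_succ]
  push_cast
  linear_combination (a ^ m * a * (descPochhammer R m).eval x) * hchoose

end DescCoeff

theorem eq_sum_descCoeff_mul {R : Type*} [CommRing R] (a : R) (h : ℕ → R → R)
    (hsucc : ∀ j x, h (j + 1) x = h j (x + 1) + a * (x - j) * h j x) (j : ℕ) (x : R) :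
    h j x = ∑ i ∈ range (j + 1), descCoeff a j i x * h 0 (x + i) := by
  induction j generalizing x with
  | zero => simp [descCoeff]
  | succ j ih =>
    have hext : h j x = ∑ i ∈ range (j + 2), descCoeff a j i x * h 0 (x + i) := by
      rw [sum_range_succ, descCoeff_self_succ, zero_mul, add_zero, ih]
    have hterm : ∀ i ∈ range (j + 1),
        descCoeff a (j + 1) (i + 1) x * h 0 (x + (i + 1 : ℕ)) = descCoeff a j i (x + 1) *
          h 0 (x + 1 + i) + a * (x - j) * (descCoeff a j (i + 1) x * h 0 (x + (i + 1 : ℕ))) := by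
      intro i hi
      rw [descCoeff_succ_succ a x j (mem_range_succ_iff.mp hi),
        show x + ((i + 1 : ℕ) : R) = x + 1 + i by push_cast; ring]
      ring
    rw [hsucc, ih (x + 1), hext, sum_range_succ' _ (j + 1), sum_range_succ' _ (j + 1),
      sum_congr rfl hterm, sum_add_distrib, ← mul_sum, descCoeff_succ_zero,
      mul_add, mul_assoc (a * _), add_assoc]

lemma Gamma_add_one_div_Gamma_add_one_sub_nat {x : ℝ} (hx : Gamma (x + 1) ≠ 0) (m : ℕ) :
    Gamma (x + 1) / Gamma (x + 1 - m) = (descPochhammer ℝ m).eval x := by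
  induction m with
  | zero => simp [hx]
  | succ m ih =>
    rw [descPochhammer_succ_eval, ← ih, Nat.cast_succ, add_sub_add_right_eq_sub]
    by_cases hxm : x - m = 0
    · -- both sides vanish, the left one because `Gamma 0 = 0`
      simp [hxm]
    · rw [show x + 1 - m = x - m + 1 by ring, Gamma_add_one hxm]
      field_simp

lemma cosh_le_exp_abs (x : ℝ) : cosh x ≤ exp |x| := by
  rw [← cosh_abs, cosh_eq]
  have : exp (-|x|) ≤ exp |x| := exp_le_exp.2 (by linarith [abs_nonneg x])
  linarith

lemma abs_sinh_le_exp_abs (x : ℝ) : |sinh x| ≤ exp |x| := by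
  rw [abs_sinh]
  exact (sinh_lt_cosh _).le.trans (cosh_abs x ▸ cosh_le_exp_abs x)

lemma tendsto_mul_sub_mul_cosh_atBot {u : ℝ} (hu : 0 < u) (c : ℝ) :
    Tendsto (fun t => c * t - u * cosh t) atTop atBot := by
  have hgrowth : Tendsto (fun t => t * ((u / 2 * exp t + 0) / t ^ 1 - c)) atTop atTop :=
    tendsto_id.atTop_mul_atTop₀ <|
      tendsto_atTop_add_const_right _ _ (tendsto_mul_exp_add_div_pow_atTop _ _ 1 (by positivity))
  refine tendsto_atBot_mono' _ ?_ (tendsto_neg_atTop_atBot.comp hgrowth)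
  filter_upwards [eventually_gt_atTop 0] with t ht
  have hcosh : exp t / 2 ≤ cosh t := by rw [cosh_eq]; linarith [exp_pos (-t)]
  have hgrowth_eq : t * ((u / 2 * exp t + 0) / t ^ 1 - c) = u / 2 * exp t - c * t := by
    field_simp
    ring
  simp only [Function.comp_apply, hgrowth_eq]
  nlinarith

lemma integrableOn_exp_mul_sub_mul_cosh {u : ℝ} (hu : 0 < u) (c : ℝ) :
    IntegrableOn (fun t => exp (c * t - u * cosh t)) (Ioi 0) := by
  refine integrable_of_isBigO_exp_neg one_pos (by fun_prop) ?_
  have hsmall : (fun t => exp ((c + 1) * t - u * cosh t)) =O[atTop] (fun _ => (1 : ℝ)) :=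
    (tendsto_exp_atBot.comp (tendsto_mul_sub_mul_cosh_atBot hu (c + 1))).isBigO_one ℝ
  refine ((isBigO_refl (fun t => exp (-1 * t)) atTop).mul hsmall).congr' ?_ (by simp)
  filter_upwards with t
  rw [← exp_add]
  ring_nf

lemma abs_exp_neg_mul_cosh_mul_le {u c : ℝ} {f : ℝ → ℝ}
    (hf : ∀ t, |f t| ≤ exp (c * |t|)) {t : ℝ} (ht : 0 ≤ t) :
    |exp (-u * cosh t) * f t| ≤ exp (c * t - u * cosh t) := by
  have hft := hf t
  rw [abs_of_nonneg ht] at hft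
  rw [abs_mul, abs_of_pos (exp_pos _), sub_eq_neg_add, exp_add, neg_mul]
  exact mul_le_mul_of_nonneg_left hft (exp_pos _).le

lemma integrableOn_exp_neg_mul_cosh_mul {u c : ℝ} (hu : 0 < u) {f : ℝ → ℝ}
    (hfc : Continuous f) (hf : ∀ t, |f t| ≤ exp (c * |t|)) :
    IntegrableOn (fun t => exp (-u * cosh t) * f t) (Ioi 0) := by
  refine (integrableOn_exp_mul_sub_mul_cosh hu c).mono' (by fun_prop) ?_
  filter_upwards [ae_restrict_mem measurableSet_Ioi] with t ht
  exact abs_exp_neg_mul_cosh_mul_le hf (le_of_lt ht)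

lemma tendsto_exp_neg_mul_cosh_mul {u c : ℝ} (hu : 0 < u) {f : ℝ → ℝ}
    (hf : ∀ t, |f t| ≤ exp (c * |t|)) :
    Tendsto (fun t => exp (-u * cosh t) * f t) atTop (𝓝 0) := by
  refine squeeze_zero_norm' ?_ (tendsto_exp_atBot.comp (tendsto_mul_sub_mul_cosh_atBot hu c))
  filter_upwards [eventually_ge_atTop 0] with t ht
  exact abs_exp_neg_mul_cosh_mul_le hf ht

lemma abs_cosh_mul_le (nu t : ℝ) : |cosh (nu * t)| ≤ exp (|nu| * |t|) := by
  rw [abs_of_pos (cosh_pos _), ← abs_mul]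
  exact cosh_le_exp_abs _

lemma abs_sinh_mul_le (nu t : ℝ) : |sinh (nu * t)| ≤ exp (|nu| * |t|) := by
  rw [← abs_mul]
  exact abs_sinh_le_exp_abs _

lemma abs_sinh_mul_sinh_mul_le (nu t : ℝ) :
    |sinh t * sinh (nu * t)| ≤ exp ((1 + |nu|) * |t|) := by
  rw [abs_mul, add_mul, one_mul, exp_add]
  exact mul_le_mul (abs_sinh_le_exp_abs t) (abs_sinh_mul_le nu t) (abs_nonneg _) (exp_pos _).le

lemma integral_exp_neg_mul_cosh_mul_sinh_mul_sinh {u : ℝ} (hu : 0 < u) (nu : ℝ) :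
    u * ∫ t in Ioi 0, exp (-u * cosh t) * (sinh t * sinh (nu * t)) = nu * besselK nu u := by
  have hderiv : ∀ t ∈ Ici (0 : ℝ), HasDerivAt (fun t => exp (-u * cosh t) * sinh (nu * t))
      (-u * (exp (-u * cosh t) * (sinh t * sinh (nu * t)))
        + nu * (exp (-u * cosh t) * cosh (nu * t))) t := by
    intro t _
    have hexp := ((hasDerivAt_cosh t).const_mul (-u)).exp
    have hsinh := ((hasDerivAt_id' t).const_mul nu).sinh
    exact (hexp.mul hsinh).congr_deriv (by ring)
  have hint₁ := integrableOn_exp_neg_mul_cosh_mul hu (by fun_prop) (abs_sinh_mul_sinh_mul_le nu)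
  have hint₂ := integrableOn_exp_neg_mul_cosh_mul hu (by fun_prop) (abs_cosh_mul_le nu)
  have hparts := integral_Ioi_of_hasDerivAt_of_tendsto' hderiv
    ((hint₁.const_mul (-u)).add (hint₂.const_mul nu))
    (tendsto_exp_neg_mul_cosh_mul hu (abs_sinh_mul_le nu))
  rw [integral_add (hint₁.const_mul _) (hint₂.const_mul _), integral_const_mul,
    integral_const_mul] at hparts
  simp only [mul_zero, sinh_zero, sub_zero] at hparts
  rw [besselK]
  linarith

lemma besselK_sub_one {u : ℝ} (hu : 0 < u) (nu : ℝ) :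
    besselK (nu - 1) u = besselK (nu + 1) u - 2 * nu / u * besselK nu u := by
  have hint (mu : ℝ) := integrableOn_exp_neg_mul_cosh_mul hu (by fun_prop) (abs_cosh_mul_le mu)
  have hdiff : besselK (nu + 1) u - besselK (nu - 1) u
      = 2 * ∫ t in Ioi 0, exp (-u * cosh t) * (sinh t * sinh (nu * t)) := by
    rw [besselK, besselK, ← integral_sub (hint _) (hint _), ← integral_const_mul]
    refine setIntegral_congr_fun measurableSet_Ioi fun t _ => ?_
    simp only [add_mul, sub_mul, one_mul, cosh_add, cosh_sub]
    ring
  have hparts : ∫ t in Ioi 0, exp (-u * cosh t) * (sinh t * sinh (nu * t)) =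
      nu * besselK nu u / u := by
    rw [← integral_exp_neg_mul_cosh_mul_sinh_mul_sinh hu nu]
    field_simp
  rw [hparts] at hdiff
  linear_combination -hdiff

lemma rpow_add_mul_besselK_sub_succ {u : ℝ} (hu : 0 < u) (j : ℕ) (x : ℝ) :
    u ^ (x + (j + 1 : ℕ)) * besselK (x - (j + 1 : ℕ)) u =
      u ^ (x + 1 + j) * besselK (x + 1 - j) u +
        -2 * (x - j) * (u ^ (x + j) * besselK (x - j) u) := by
  have hrec := besselK_sub_one hu (x - j)
  rw [show x - j - 1 = x - (j + 1 : ℕ) by push_cast; ring,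
    show x - j + 1 = x + 1 - j by ring] at hrec
  rw [hrec, show x + (j + 1 : ℕ) = x + j + 1 by push_cast; ring, rpow_add_one hu.ne',
    show x + 1 + j = x + j + 1 by ring, rpow_add_one hu.ne']
  field_simp
  ring

theorem besselK_recursion_general (nu : ℝ) (hnu : 0 < nu) (j : ℕ)
    (u : ℝ) (hu : 0 < u) :
    u ^ (nu + j) * besselK (nu - j) u =
      ∑ i ∈ Finset.range (j + 1),
        (-2 : ℝ) ^ (j - i) * (j.choose i) *
          (Real.Gamma (nu + 1) / Real.Gamma (nu + 1 - (j - i : ℕ))) *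
          u ^ (nu + i) * besselK (nu + i) u := by
  have hΓ : Gamma (nu + 1) ≠ 0 := (Gamma_pos_of_pos (by linarith)).ne'
  rw [eq_sum_descCoeff_mul (-2 : ℝ) (fun (j : ℕ) (x : ℝ) => u ^ (x + j) * besselK (x - j) u)
    (rpow_add_mul_besselK_sub_succ hu) j nu]
  refine sum_congr rfl fun i _ => ?_
  simp only [descCoeff, Gamma_add_one_div_Gamma_add_one_sub_nat hΓ, CharP.cast_eq_zero, add_zero,
    sub_zero]
  ring

theorem besselK_recursion (nu : ℝ) (hnu : 0 < nu) (j : ℕ) (hj : (j : ℝ) < nu)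
    (u : ℝ) (hu : 0 < u) :
    u ^ (nu + j) * besselK (nu - j) u =
      ∑ i ∈ Finset.range (j + 1),
        (-2 : ℝ) ^ (j - i) * (j.choose i) *
          (Real.Gamma (nu + 1) / Real.Gamma (nu + 1 - (j - i : ℕ))) *
          u ^ (nu + i) * besselK (nu + i) u :=
  besselK_recursion_general nu hnu j u hu
end
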